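/- arXiv:2202.01567 — 11 statements merged into one kernel-verified Lean document; each statement's English description precedes it below -/
import Mathlib

section
/- For any perpetual trimming schedule of n bamboos with daily growth rates h_1,...,h_n summing to H, the supremum over time of the maximum bamboo height is at least H. That is, there is no schedule (cutting one bamboo per day, resetting its height to zero, all bamboos growing by h_i per day) keeping all bamboo heights strictly below H at all times. -/
/-!
Each day the total height grows by `H` and loses the height of the bamboo that is cut, so if
every height stays below `H` the total height is strictly increasing. But a height below `H`
means bamboo `i` is cut at least every `H / h i` days, so the vector of ages since the last cut,
and with it the total height, takes only finitely many values: impossible for a strictly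
increasing sequence.
-/

/-- The day of the last cut of bamboo `i` strictly before day `t`
(`0` if it has never been cut). `S s` is the bamboo cut at the end of day `s`. -/
def lastCut {n : ℕ} (S : ℕ → Fin n) (i : Fin n) (t : ℕ) : ℕ :=
  ((Finset.range t).filter (fun s => S s = i)).sup id

/-- Height of bamboo `i` (growth rate `h i` per day, starting from height `0`)
at time `t`, just before the cut performed at the end of day `t`. -/
noncomputable def bgtHeight {n : ℕ} (h : Fin n → ℝ) (S : ℕ → Fin n) (i : Fin n) (t : ℕ) : ℝ :=
  h i * ((t : ℝ) - (lastCut S i t : ℝ))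

section Schedule

variable {n : ℕ} (h : Fin n → ℝ) (S : ℕ → Fin n) (i : Fin n) (t : ℕ)

def age : ℕ := t - lastCut S i t

lemma lastCut_le : lastCut S i t ≤ t :=
  Finset.sup_le fun _ hs => (Finset.mem_range.mp (Finset.mem_filter.mp hs).1).le

lemma lastCut_succ : lastCut S i (t + 1) = if S t = i then t else lastCut S i t := by
  unfold lastCut
  rw [Finset.range_add_one, Finset.filter_insert]
  split_ifs
  · exact (Finset.sup_insert ..).trans (max_eq_left (lastCut_le S i t))
  · rfl

lemma bgtHeight_eq_mul_age : bgtHeight h S i t = h i * age S i t := by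
  rw [bgtHeight, age, Nat.cast_sub (lastCut_le S i t)]

lemma bgtHeight_succ :
    bgtHeight h S i (t + 1) =
      bgtHeight h S i t + h i - if S t = i then bgtHeight h S i t else 0 := by
  unfold bgtHeight
  rw [lastCut_succ]
  split_ifs <;> push_cast <;> ring

lemma sum_bgtHeight_succ :
    ∑ i, bgtHeight h S i (t + 1) =
      ∑ i, bgtHeight h S i t + (∑ i, h i - bgtHeight h S (S t) t) := by
  simp only [bgtHeight_succ, Finset.sum_sub_distrib, Finset.sum_add_distrib,
    Finset.sum_ite_eq, Finset.mem_univ, if_true]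
  ring

variable {h S}

lemma age_le_of_bgtHeight_lt {C : ℝ} (hi : 0 < h i) (hC : bgtHeight h S i t < C) :
    age S i t ≤ ⌈C / h i⌉₊ := by
  rw [bgtHeight_eq_mul_age, mul_comm, ← lt_div_iff₀ hi] at hC
  exact_mod_cast hC.le.trans (Nat.le_ceil _)

lemma finite_range_age_of_bgtHeight_lt {C : ℝ} (hpos : ∀ i, 0 < h i)
    (hC : ∀ i t, bgtHeight h S i t < C) : (Set.range fun t i => age S i t).Finite := by
  refine (Set.finite_Iic fun i => ⌈C / h i⌉₊).subset ?_
  rintro _ ⟨t, rfl⟩ i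
  exact age_le_of_bgtHeight_lt i t (hpos i) (hC i t)

end Schedule

theorem bgt_lower_bound_H_general (n : ℕ) (h : Fin n → ℝ) (hpos : ∀ i, 0 < h i)
    (S : ℕ → Fin n) :
    ¬ (∀ (i : Fin n) (t : ℕ), bgtHeight h S i t < ∑ j, h j) := by
  intro hlt
  set V : ℕ → ℝ := fun t => ∑ i, bgtHeight h S i t
  have hV_mono : StrictMono V := strictMono_nat_of_lt_succ fun t => by
    simp only [V, sum_bgtHeight_succ]
    linarith [hlt (S t) t]
  have hV_finite : (Set.range V).Finite := by
    refine ((finite_range_age_of_bgtHeight_lt hpos hlt).image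
      fun a => ∑ i, h i * a i).subset ?_
    rintro _ ⟨t, rfl⟩
    exact ⟨_, ⟨t, rfl⟩, by simp only [V, bgtHeight_eq_mul_age]⟩
  exact Set.infinite_range_of_injective hV_mono.injective hV_finite

/-- No schedule can keep all bamboo heights strictly below `H = ∑ h i` at all times. -/
theorem bgt_lower_bound_H (n : ℕ) (hn : 1 ≤ n) (h : Fin n → ℝ) (hpos : ∀ i, 0 < h i)
    (S : ℕ → Fin n) :
    ¬ (∀ (i : Fin n) (t : ℕ), bgtHeight h S i t < ∑ j, h j) :=
  bgt_lower_bound_H_general n h hpos S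
end

section
/- For the discrete BGT instance with growth rates (7/15, 1/3, 1/5) (so H = 1), every schedule lets some bamboo reach height at least 4/3, and the periodic schedule repeating (1,2,1,2,1,3) keeps all bamboo heights at most 4/3. Hence the optimal maximum height for this instance equals 4/3 > H. -/
/-!
To keep every height below `4/3`, the bamboo of rate `7/15` must be cut at least once in any two
consecutive days and the bamboo of rate `1/3` at least once in any three. Then the two neighbours
of a day spent on the bamboo of rate `1/5` both go to the first bamboo, and the second one is left
uncut for three days; so the third bamboo is never cut after day one and eventually reaches `4/3`.
The periodic schedule cuts the three bamboos at intervals of at most `2`, `4` and `6` days, keeping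
their heights at most `14/15`, `4/3` and `6/5`.
-/

open Finset

section LastCut

variable {n : ℕ} (S : ℕ → Fin n) {i : Fin n}

theorem le_lastCut {s t : ℕ} (hst : s < t) (hS : S s = i) : s ≤ lastCut S i t :=
  le_sup (f := id) (by simp [hst, hS])

theorem lastCut_spec {t : ℕ} (h : 0 < lastCut S i t) :
    S (lastCut S i t) = i ∧ lastCut S i t < t := by
  obtain ⟨b, hb, -⟩ := Finset.lt_sup_iff.1 h
  obtain ⟨s, hs, hsup⟩ := exists_mem_eq_sup _ ⟨b, hb⟩ id
  simp only [mem_filter, mem_range] at hs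
  rw [lastCut, hsup]
  exact ⟨hs.2, hs.1⟩

end LastCut

/-- Day `0` is excluded: `lastCut` cannot tell a cut on day `0` from no cut at all. -/
def IsCutWithin {n : ℕ} (S : ℕ → Fin n) (i : Fin n) (c : ℕ) : Prop :=
  ∀ a, 0 < a → ∃ s ∈ Ico a (a + c), S s = i

section IsCutWithin

variable {n : ℕ} {S : ℕ → Fin n} {i : Fin n} {c : ℕ}

theorem isCutWithin_iff : IsCutWithin S i c ↔ ∀ t, t ≤ lastCut S i t + c := by
  constructor
  · intro hS t
    rcases le_or_gt t c with htc | hct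
    · omega
    obtain ⟨s, hs, hsi⟩ := hS (t - c) (by omega)
    rw [mem_Ico] at hs
    have := le_lastCut S (show s < t by omega) hsi
    omega
  · intro hS a ha
    have hlast := hS (a + c)
    have hpos : 0 < lastCut S i (a + c) := by omega
    obtain ⟨hcut, hlt⟩ := lastCut_spec S hpos
    exact ⟨_, mem_Ico.2 ⟨by omega, hlt⟩, hcut⟩

theorem bgtHeight_le_of_isCutWithin {h : Fin n → ℝ} (hi : 0 ≤ h i) (hS : IsCutWithin S i c)
    (t : ℕ) : bgtHeight h S i t ≤ h i * c := by
  have hgap : (t : ℝ) ≤ lastCut S i t + c := by exact_mod_cast isCutWithin_iff.1 hS t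
  exact mul_le_mul_of_nonneg_left (by linarith) hi

theorem isCutWithin_of_bgtHeight_lt {h : Fin n → ℝ} (hi : 0 < h i)
    (hS : ∀ t, bgtHeight h S i t < h i * (c + 1)) : IsCutWithin S i c := by
  refine isCutWithin_iff.2 fun t => Nat.lt_succ_iff.1 ?_
  have hgap := lt_of_mul_lt_mul_left (hS t) hi.le
  exact_mod_cast (show (t : ℝ) < lastCut S i t + c + 1 by linarith)

theorem isCutWithin_of_periodic {p : ℕ} (hp : 0 < p) (hS : Function.Periodic S p)
    (hcut : ∀ a < p, ∃ s ∈ Ico a (a + c), S s = i) : IsCutWithin S i c := by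
  intro a _
  obtain ⟨s, hs, hsi⟩ := hcut (a % p) (Nat.mod_lt a hp)
  rw [mem_Ico] at hs
  refine ⟨s + a / p * p, mem_Ico.2 ⟨?_, ?_⟩, (hS.nat_mul (a / p) s).trans hsi⟩ <;>
    linarith [Nat.mod_add_div' a p]

/-- A day `d` spent on neither `i` nor `j` would force both neighbours of `d` onto `i`, leaving
`j` uncut for three days. -/
theorem IsCutWithin.eq_or_eq {j : Fin n} (hi : IsCutWithin S i 2) (hj : IsCutWithin S j 3)
    (hij : i ≠ j) {d : ℕ} (hd : 2 ≤ d) : S d = i ∨ S d = j := by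
  by_contra! hdij
  have hprev : S (d - 1) = i := by
    obtain ⟨s, hs, hsi⟩ := hi (d - 1) (by omega)
    obtain rfl | rfl : s = d - 1 ∨ s = d := by rw [mem_Ico] at hs; omega
    exacts [hsi, absurd hsi hdij.1]
  have hnext : S (d + 1) = i := by
    obtain ⟨s, hs, hsi⟩ := hi d (by omega)
    obtain rfl | rfl : s = d ∨ s = d + 1 := by rw [mem_Ico] at hs; omega
    exacts [absurd hsi hdij.1, hsi]
  obtain ⟨s, hs, hsj⟩ := hj (d - 1) (by omega)
  obtain rfl | rfl | rfl : s = d - 1 ∨ s = d ∨ s = d + 1 := by rw [mem_Ico] at hs; omega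
  exacts [hij (hprev ▸ hsj), hdij.2 hsj, hij (hnext ▸ hsj)]

end IsCutWithin

theorem exists_four_thirds_le_bgtHeight (S : ℕ → Fin 3) :
    ∃ i t, (4 : ℝ) / 3 ≤ bgtHeight ![7/15, 1/3, 1/5] S i t := by
  by_contra! hS
  have cutWithin (i : Fin 3) (c : ℕ) (hc : (4 : ℝ) / 3 ≤ ![7/15, 1/3, 1/5] i * (c + 1)) :
      IsCutWithin S i c :=
    isCutWithin_of_bgtHeight_lt (by fin_cases i <;> norm_num) fun t => (hS i t).trans_le hc
  obtain ⟨d, hd, hSd⟩ := cutWithin 2 6 (by simp; norm_num) 2 two_pos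
  have := (cutWithin 0 2 (by norm_num)).eq_or_eq (cutWithin 1 3 (by norm_num)) (by decide)
    (d := d) (mem_Ico.1 hd).1
  simp [hSd] at this

def periodicSchedule : ℕ → Fin 3 :=
  fun t => ![2, 0, 1, 0, 1, 0] ⟨t % 6, Nat.mod_lt t (Nat.succ_pos 5)⟩

theorem periodicSchedule_periodic : Function.Periodic periodicSchedule 6 := by
  intro t
  simp [periodicSchedule]

theorem bgtHeight_periodicSchedule_le (i : Fin 3) (t : ℕ) :
    bgtHeight ![7/15, 1/3, 1/5] periodicSchedule i t ≤ 4 / 3 := by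
  have bound (c : ℕ) (hcut : ∀ a < 6, ∃ s ∈ Ico a (a + c), periodicSchedule s = i)
      (hc : ![(7 : ℝ)/15, 1/3, 1/5] i * c ≤ 4 / 3) :
      bgtHeight ![7/15, 1/3, 1/5] periodicSchedule i t ≤ 4 / 3 :=
    (bgtHeight_le_of_isCutWithin (by fin_cases i <;> norm_num)
      (isCutWithin_of_periodic (by norm_num) periodicSchedule_periodic hcut) t).trans hc
  fin_cases i
  · exact bound 2 (by decide) (by norm_num)
  · exact bound 4 (by decide) (by norm_num)
  · exact bound 6 (by decide) (by norm_num)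

/-- For the instance `(7/15, 1/3, 1/5)`: every schedule lets some bamboo reach height `≥ 4/3`;
the periodic schedule repeating `(b₁,b₂,b₁,b₂,b₁,b₃)` keeps all heights `≤ 4/3`;
hence the optimal maximum height equals `4/3`. -/
theorem bgt_715_13_15 :
    (∀ S : ℕ → Fin 3, ∃ (i : Fin 3) (t : ℕ),
        (4 : ℝ) / 3 ≤ bgtHeight ![7/15, 1/3, 1/5] S i t) ∧
    (∀ (i : Fin 3) (t : ℕ),
        bgtHeight ![7/15, 1/3, 1/5]
          (fun t => ![2, 0, 1, 0, 1, 0] ⟨t % 6, by omega⟩) i t ≤ 4 / 3) ∧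
    sInf {M : ℝ | ∃ S : ℕ → Fin 3,
        ∀ (i : Fin 3) (t : ℕ), bgtHeight ![7/15, 1/3, 1/5] S i t ≤ M} = 4 / 3 := by
  refine ⟨exists_four_thirds_le_bgtHeight, bgtHeight_periodicSchedule_le, ?_⟩
  refine IsLeast.csInf_eq ⟨⟨periodicSchedule, bgtHeight_periodicSchedule_le⟩, ?_⟩
  rintro M ⟨S, hS⟩
  obtain ⟨i, t, hit⟩ := exists_four_thirds_le_bgtHeight S
  exact hit.trans (hS i t)
end

section
/- If a Pinwheel instance ⟨f_1, f_2, ..., f_n⟩ of positive integer frequencies is feasible, then its density D = Σ_{i=1}^{n} 1/f_i is at most 1. -/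
/-- `S` is a Pinwheel schedule for the frequencies `f`: every window of `f i`
consecutive days contains an occurrence of index `i`. -/
def PinSched {n : ℕ} (f : Fin n → ℕ) (S : ℕ → Fin n) : Prop :=
  ∀ (i : Fin n) (t : ℕ), ∃ s, t ≤ s ∧ s < t + f i ∧ S s = i

/-- The Pinwheel instance `f` is feasible. -/
def PinFeasible {n : ℕ} (f : Fin n → ℕ) : Prop :=
  ∃ S : ℕ → Fin n, PinSched f S

/-!
Over the first `T` days each day serves exactly one index, while a schedule serves index `i`
at least once in each of the `T / fᵢ` disjoint blocks `[k fᵢ, (k + 1) fᵢ)`. Hence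
`∑ T / fᵢ ≤ T`, and taking `T = ∏ fᵢ` makes every quotient exact, so `∑ 1 / fᵢ ≤ 1`.
-/

open Finset

namespace PinSched

variable {n : ℕ} {f : Fin n → ℕ} {S : ℕ → Fin n}

lemma pos (hS : PinSched f S) (i : Fin n) : 0 < f i := by
  obtain ⟨s, hs0, hs, -⟩ := hS i 0
  omega

lemma add_one_le_card_filter_range_add (hS : PinSched f S) (i : Fin n) (t : ℕ) :
    #{s ∈ range t | S s = i} + 1 ≤ #{s ∈ range (t + f i) | S s = i} := by
  obtain ⟨s, hts, hst, hSs⟩ := hS i t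
  have hnotMem : s ∉ ({s ∈ range t | S s = i} : Finset ℕ) := by
    simp only [mem_filter, mem_range]; omega
  rw [← card_insert_of_notMem hnotMem]
  refine card_le_card fun x hx => ?_
  simp only [mem_insert, mem_filter, mem_range] at hx ⊢
  rcases hx with rfl | ⟨hxt, hSx⟩ <;> omega

lemma le_card_filter_range_mul (hS : PinSched f S) (i : Fin n) (k : ℕ) :
    k ≤ #{s ∈ range (k * f i) | S s = i} := by
  induction k with
  | zero => simp
  | succ k ih =>
    rw [add_one_mul]
    exact (Nat.add_le_add_right ih 1).trans (hS.add_one_le_card_filter_range_add i _)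

lemma sum_div_le (hS : PinSched f S) {T : ℕ} (hT : ∀ i, f i ∣ T) :
    ∑ i, T / f i ≤ T := by
  calc ∑ i, T / f i ≤ ∑ i, #{s ∈ range T | S s = i} := by
        refine sum_le_sum fun i _ => ?_
        simpa [Nat.div_mul_cancel (hT i)] using hS.le_card_filter_range_mul i (T / f i)
    _ = T := by
        rw [← card_eq_sum_card_fiberwise fun s _ => mem_univ (S s), card_range]

end PinSched

theorem pinwheel_density_le_one_general (n : ℕ) (f : Fin n → ℕ)
    (hfeas : PinFeasible f) :
    ∑ i, (1 : ℝ) / (f i) ≤ 1 := by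
  obtain ⟨S, hS⟩ := hfeas
  set T := ∏ i, f i
  have hdvd : ∀ i, f i ∣ T := fun i => dvd_prod_of_mem f (mem_univ i)
  have hT : (0 : ℝ) < T := by exact_mod_cast prod_pos fun i _ => hS.pos i
  have hcount : ∑ i, ((T / f i : ℕ) : ℝ) ≤ T := by exact_mod_cast hS.sum_div_le hdvd
  calc ∑ i, (1 : ℝ) / f i = (∑ i, ((T / f i : ℕ) : ℝ)) / T := by
        rw [sum_div]
        refine sum_congr rfl fun i _ => ?_
        rw [Nat.cast_div (hdvd i) (by exact_mod_cast (hS.pos i).ne'),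
          div_div_cancel_left' hT.ne', one_div]
    _ ≤ 1 := (div_le_one hT).2 hcount

/-- A feasible Pinwheel instance has density `∑ 1/fᵢ ≤ 1`. -/
theorem pinwheel_density_le_one (n : ℕ) (f : Fin n → ℕ) (hf : ∀ i, 2 ≤ f i)
    (hfeas : PinFeasible f) :
    ∑ i, (1 : ℝ) / (f i) ≤ 1 :=
  pinwheel_density_le_one_general n f hfeas
end

section
/- The Pinwheel instance ⟨2, 3, M⟩ is infeasible for every integer M ≥ 2. Consequently, there exist infeasible Pinwheel instances with density arbitrarily close to 5/6: the density 1/2 + 1/3 + 1/M tends to 5/6 as M → ∞. -/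
/-!
A task of period 2 occupies one of any two consecutive slots, so every slot other than the
first that does not hold it is flanked by it on both sides. If such a slot held a third task,
the window of length 3 around it would contain the period-2 task twice and the third task once,
leaving no room for a task of period 3. Hence tasks of periods 2 and 3 together leave no slot
after the first for any other task, whatever its period.
-/

namespace PinSched

variable {n : ℕ} {f : Fin n → ℕ} {S : ℕ → Fin n}

theorem apply_eq_or_apply_succ_eq (hS : PinSched f S) {i : Fin n} (hi : f i ≤ 2) (t : ℕ) :
    S t = i ∨ S (t + 1) = i := by
  obtain ⟨s, hts, hst, rfl⟩ := hS i t
  obtain rfl | rfl : s = t ∨ s = t + 1 := by omega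
  exacts [.inl rfl, .inr rfl]

theorem apply_eq_or_apply_succ_eq_or_apply_add_two_eq (hS : PinSched f S) {j : Fin n}
    (hj : f j ≤ 3) (t : ℕ) : S t = j ∨ S (t + 1) = j ∨ S (t + 2) = j := by
  obtain ⟨s, hts, hst, rfl⟩ := hS j t
  obtain rfl | rfl | rfl : s = t ∨ s = t + 1 ∨ s = t + 2 := by omega
  exacts [.inl rfl, .inr (.inl rfl), .inr (.inr rfl)]

theorem apply_eq_or_apply_eq_of_le_two_of_le_three (hS : PinSched f S) {i j : Fin n}
    (hij : i ≠ j) (hi : f i ≤ 2) (hj : f j ≤ 3) {t : ℕ} (ht : 1 ≤ t) :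
    S t = i ∨ S t = j := by
  obtain ⟨u, rfl⟩ : ∃ u, t = u + 1 := ⟨t - 1, by omega⟩
  by_contra! hother
  have before : S u = i := (hS.apply_eq_or_apply_succ_eq hi u).resolve_right hother.1
  have after : S (u + 2) = i := (hS.apply_eq_or_apply_succ_eq hi (u + 1)).resolve_left hother.1
  rcases hS.apply_eq_or_apply_succ_eq_or_apply_add_two_eq hj u with h | h | h
  · exact hij (before.symm.trans h)
  · exact hother.2 h
  · exact hij (after.symm.trans h)

end PinSched

theorem not_pinFeasible_of_le_two_of_le_three {n : ℕ} {f : Fin n → ℕ} {i j k : Fin n}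
    (hij : i ≠ j) (hki : k ≠ i) (hkj : k ≠ j) (hi : f i ≤ 2) (hj : f j ≤ 3) :
    ¬ PinFeasible f := by
  rintro ⟨S, hS⟩
  obtain ⟨s, hs, -, hSs⟩ := hS k 1
  rcases hS.apply_eq_or_apply_eq_of_le_two_of_le_three hij hi hj hs with h | h
  exacts [hki (hSs.symm.trans h), hkj (hSs.symm.trans h)]

/-- The Pinwheel instance `⟨2,3,M⟩` is infeasible for every `M ≥ 2`, and its density
`1/2 + 1/3 + 1/M` tends to `5/6` as `M → ∞`, so there are infeasible instances with
density arbitrarily close to `5/6`. -/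
theorem pinwheel_23M_infeasible :
    (∀ M : ℕ, 2 ≤ M → ¬ PinFeasible ![2, 3, M]) ∧
    Filter.Tendsto (fun M : ℕ => (1 : ℝ) / 2 + 1 / 3 + 1 / M)
      Filter.atTop (nhds (5 / 6)) := by
  refine ⟨fun M _ => not_pinFeasible_of_le_two_of_le_three (i := 0) (j := 1) (k := 2)
    (by decide) (by decide) (by decide) le_rfl le_rfl, ?_⟩
  have h := (tendsto_const_nhds (x := (1 : ℝ) / 2 + 1 / 3)).add
    tendsto_one_div_atTop_nhds_zero_nat
  norm_num at h ⊢
  exact h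
end

section
/- Let V be a Pinwheel instance containing two equal even frequencies f_i = f_j = 2f, and let V' be the instance obtained by replacing these two frequencies by the single frequency f. If V' is feasible then V is feasible. (Replacement of the occurrences of frequency f alternately by i and j yields a valid schedule.) -/
def HitsEveryWindow (p : ℕ → Prop) (w : ℕ) : Prop :=
  ∀ t, ∃ s, t ≤ s ∧ s < t + w ∧ p s

namespace HitsEveryWindow

variable {p q : ℕ → Prop} {w : ℕ}

theorem mono (h : HitsEveryWindow p w) (hpq : ∀ s, p s → q s) : HitsEveryWindow q w := fun t ↦
  let ⟨s, hts, hst, hs⟩ := h t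
  ⟨s, hts, hst, hpq s hs⟩

theorem infinite (h : HitsEveryWindow p w) : (Set.ofPred p).Infinite :=
  Set.infinite_of_forall_exists_gt fun t ↦
    let ⟨s, hts, _, hs⟩ := h (t + 1)
    ⟨s, hs, hts⟩

variable [DecidablePred p]

theorem count_lt_count_add (h : HitsEveryWindow p w) (t : ℕ) :
    Nat.count p t < Nat.count p (t + w) := by
  obtain ⟨s, hts, hst, hs⟩ := h t
  calc Nat.count p t ≤ Nat.count p s := Nat.count_monotone p hts
    _ < Nat.count p (s + 1) := Nat.count_lt_count_succ_iff.mpr hs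
    _ ≤ Nat.count p (t + w) := Nat.count_monotone p hst

theorem count_add_two_le_count_add_two_mul (h : HitsEveryWindow p w) (t : ℕ) :
    Nat.count p t + 2 ≤ Nat.count p (t + 2 * w) := by
  have h₁ := h.count_lt_count_add t
  have h₂ := h.count_lt_count_add (t + w)
  rw [add_assoc, ← two_mul] at h₂
  omega

theorem count_mod_two (h : HitsEveryWindow p w) {r : ℕ} (hr : r < 2) :
    HitsEveryWindow (fun s ↦ p s ∧ Nat.count p s % 2 = r) (2 * w) := by
  intro t
  have hinf := h.infinite
  set k := Nat.count p t + (r + Nat.count p t) % 2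
  have hk : k < Nat.count p (t + 2 * w) := by
    have := h.count_add_two_le_count_add_two_mul t
    omega
  refine ⟨Nat.nth p k, (Nat.count_le_iff_le_nth hinf).mp (by omega),
    Nat.nth_lt_of_lt_count hk, Nat.nth_mem_of_infinite hinf k, ?_⟩
  rw [Nat.count_nth_of_infinite hinf]
  omega

end HitsEveryWindow

theorem pinSched_iff {n : ℕ} {f : Fin n → ℕ} {S : ℕ → Fin n} :
    PinSched f S ↔ ∀ i, HitsEveryWindow (S · = i) (f i) :=
  Iff.rfl

theorem pinwheel_split_pair_general (n f : ℕ)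
    (f' : Fin (n + 1) → ℕ) (hlast : f' (Fin.last n) = f)
    (hfeas : PinFeasible f') :
    PinFeasible (Fin.snoc (Fin.snoc (fun i : Fin n => f' i.castSucc) (2 * f)) (2 * f)) := by
  obtain ⟨S, hS⟩ := hfeas
  rw [pinSched_iff] at hS
  have hsplit := hlast ▸ hS (Fin.last n)
  let T : ℕ → Fin (n + 2) := fun s ↦
    if S s = Fin.last n then
      if Nat.count (S · = Fin.last n) s % 2 = 0 then (Fin.last n).castSucc else Fin.last (n + 1)
    else (S s).castSucc
  refine ⟨T, pinSched_iff.mpr fun i ↦ ?_⟩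
  induction i using Fin.lastCases with
  | last =>
    simpa using (hsplit.count_mod_two (r := 1) (by norm_num)).mono
      fun s ⟨hs, hr⟩ ↦ by simp [T, hs, hr]
  | cast i =>
    induction i using Fin.lastCases with
    | last =>
      simpa using (hsplit.count_mod_two (r := 0) (by norm_num)).mono
        fun s ⟨hs, hr⟩ ↦ by simp [T, hs, hr]
    | cast i =>
      simpa using (hS i.castSucc).mono fun s hs ↦ by
        simp [T, hs, (Fin.castSucc_lt_last i).ne]

/-- Observation 1: if the instance `V'` (frequencies `f'`, whose last entry is `f`)
is feasible, then so is the instance `V` obtained by replacing this frequency `f`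
by two copies of the frequency `2f`. -/
theorem pinwheel_split_pair (n f : ℕ) (hf : 1 ≤ f)
    (f' : Fin (n + 1) → ℕ) (hlast : f' (Fin.last n) = f)
    (hfeas : PinFeasible f') :
    PinFeasible (Fin.snoc (Fin.snoc (fun i : Fin n => f' i.castSucc) (2 * f)) (2 * f)) :=
  pinwheel_split_pair_general n f f' hlast hfeas
end

section
/- Let V be a Pinwheel instance containing m equal frequencies f_{i_1} = ... = f_{i_m} = m·f where f ≥ 2 is an integer, and let V' be obtained by replacing these m frequencies by the single frequency f. If V' is feasible then V is feasible: in a schedule for V', replacing the (im+q)-th occurrence of the new index by i_q (for each i ≥ 0, 1 ≤ q ≤ m) gives a feasible schedule for V. -/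
/-!
Every window of `f` consecutive slots of a schedule for `V'` contains the merged index, so a
window of `m * f` slots contains `m` consecutive occurrences of it, and their occurrence
counts run through all residues mod `m`. Hence sending the `k`-th occurrence to the copy
`k % m` serves each copy within every window of length `m * f`.
-/

namespace Nat

variable {p : ℕ → Prop} {f : ℕ}

theorem infinite_setOf_of_forall_window (hp : ∀ t, ∃ s, t ≤ s ∧ s < t + f ∧ p s) :
    (Set.ofPred p).Infinite :=
  Set.infinite_of_forall_exists_gt fun a ↦
    let ⟨s, has, _, hs⟩ := hp (a + 1)
    ⟨s, hs, has⟩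

variable [DecidablePred p]

theorem count_add_le_count_add_mul (hp : ∀ t, ∃ s, t ≤ s ∧ s < t + f ∧ p s) (t k : ℕ) :
    count p t + k ≤ count p (t + k * f) := by
  induction k with
  | zero => simp
  | succ k ih =>
    obtain ⟨s, hts, hst, hs⟩ := hp (t + k * f)
    calc count p t + (k + 1) ≤ count p (t + k * f) + 1 := by omega
      _ ≤ count p s + 1 := by gcongr
      _ ≤ count p (t + (k + 1) * f) :=
        count_strict_mono hs (by rw [add_one_mul]; omega)

theorem exists_mem_window_count_eq (hp : ∀ t, ∃ s, t ≤ s ∧ s < t + f ∧ p s) (t j : ℕ) :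
    ∃ s, t ≤ s ∧ s < t + (j + 1) * f ∧ p s ∧ count p s = count p t + j := by
  have hinf := infinite_setOf_of_forall_window hp
  refine ⟨nth p (count p t + j), ?_, ?_, nth_mem_of_infinite hinf _,
    count_nth_of_infinite hinf _⟩
  · exact (le_nth_count hinf t).trans (nth_monotone hinf (by omega))
  · exact nth_lt_of_lt_count (by have := count_add_le_count_add_mul hp t (j + 1); omega)

theorem exists_mem_window_count_mod_eq (hp : ∀ t, ∃ s, t ≤ s ∧ s < t + f ∧ p s)
    {m q : ℕ} (hq : q < m) (t : ℕ) :
    ∃ s, t ≤ s ∧ s < t + m * f ∧ p s ∧ count p s % m = q := by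
  have hm : 0 < m := by omega
  set j := (q + m - count p t % m) % m
  obtain ⟨s, hts, hst, hs, hcount⟩ := exists_mem_window_count_eq hp t j
  refine ⟨s, hts, hst.trans_le ?_, hs, ?_⟩
  · have : j < m := mod_lt _ hm
    gcongr
    omega
  · have hsplit : count p t + (q + m - count p t % m) = q + m * (count p t / m + 1) := by
      have := mod_lt (count p t) hm
      have := mod_add_div (count p t) m
      rw [mul_add_one]
      omega
    rw [hcount, add_mod, mod_mod, ← add_mod, hsplit, add_mul_mod_self_left, mod_eq_of_lt hq]

end Nat

def splitFreq {n : ℕ} (f' : Fin (n + 1) → ℕ) (m : ℕ) (i : Fin (n + m)) : ℕ :=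
  if h : (i : ℕ) < n then f' ⟨i, Nat.lt_succ_of_lt h⟩ else m * f' (Fin.last n)

/-- The `k`-th occurrence (from `0`) of the last index of `S` becomes index `n + k % m`. -/
def splitSchedule {n m : ℕ} (hm : 0 < m) (S : ℕ → Fin (n + 1)) (t : ℕ) : Fin (n + m) :=
  Fin.lastCases
    (Fin.natAdd n ⟨Nat.count (fun s ↦ S s = Fin.last n) t % m, Nat.mod_lt _ hm⟩)
    (Fin.castAdd m) (S t)

theorem PinSched.splitSchedule {n m : ℕ} (hm : 0 < m) {f' : Fin (n + 1) → ℕ}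
    {S : ℕ → Fin (n + 1)} (hS : PinSched f' S) :
    PinSched (splitFreq f' m) (splitSchedule hm S) := by
  intro i t
  induction i using Fin.addCases with
  | left i =>
    obtain ⟨s, hts, hst, hs⟩ := hS i.castSucc t
    refine ⟨s, hts, by simp only [splitFreq, Fin.val_castAdd, i.isLt, dite_true]; exact hst, ?_⟩
    simp [_root_.splitSchedule, hs]
  | right q =>
    obtain ⟨s, hts, hst, hs, hcount⟩ :=
      Nat.exists_mem_window_count_mod_eq (hS (Fin.last n)) q.isLt t
    refine ⟨s, hts, by simpa [splitFreq] using hst, ?_⟩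
    simp [_root_.splitSchedule, hs, hcount]

/-- Observation 2: if the instance `V'` (frequencies `f'`, whose last entry is `f ≥ 2`)
is feasible, then so is the instance `V` obtained by replacing this single frequency `f`
by `m` copies of the frequency `m·f`. -/
theorem pinwheel_split_m (n m f : ℕ) (hm : 1 ≤ m)
    (f' : Fin (n + 1) → ℕ) (hlast : f' (Fin.last n) = f)
    (hfeas : PinFeasible f') :
    PinFeasible (fun i : Fin (n + m) =>
      if h : (i : ℕ) < n then f' ⟨(i : ℕ), by omega⟩ else m * f) := by
  subst hlast
  obtain ⟨S, hS⟩ := hfeas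
  exact ⟨splitSchedule hm S, hS.splitSchedule hm⟩
end

section
/- For every discrete BGT instance I with growth rates h_1 ≥ ... ≥ h_n summing to H, the optimal maximum height satisfies OPT(I) ≤ 2H. More precisely, there exists a schedule in which bamboo b_i is cut at least once in every window of ⌊2H/h_i⌋' consecutive days, where the frequencies are powers of 2, keeping every bamboo height below 2H. -/
open Finset

lemma Nat.exists_modEq_of_le_lt_add (t r : ℕ) {m : ℕ} (hm : 0 < m) :
    ∃ s, t ≤ s ∧ s < t + m ∧ s ≡ r [MOD m] := by
  have hmod := Nat.mod_lt (r + (m - t % m)) hm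
  refine ⟨t + (r + (m - t % m)) % m, by omega, by omega, ?_⟩
  calc t + (r + (m - t % m)) % m ≡ t + (r + (m - t % m)) [MOD m] :=
        Nat.ModEq.add_left _ (Nat.mod_modEq _ _)
    _ = m * (t / m + 1) + r := by
        have := Nat.div_add_mod t m
        have := Nat.mod_lt t hm
        rw [mul_add]
        omega
    _ ≡ r [MOD m] := Nat.ModEq.modulus_mul_add

lemma Nat.card_filter_range_modEq_of_dvd {d m : ℕ} (hd : 0 < d) (hdm : d ∣ m) (v : ℕ) :
    #{x ∈ range m | x ≡ v [MOD d]} = m / d := by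
  rw [← Nat.count_eq_card_filter_range, Nat.count_modEq_card m hd v,
    Nat.mod_eq_zero_of_dvd hdm]
  simp

section Residues

variable {ι : Type*}

lemma sum_div_lt_of_sum_inv_add_inv_le_one (s : Finset ι) (f : ι → ℕ) {m : ℕ} (hm : 0 < m)
    (hs : ∑ j ∈ s, (f j : ℝ)⁻¹ + (m : ℝ)⁻¹ ≤ 1) : ∑ j ∈ s, m / f j < m := by
  have hm' : (0 : ℝ) < m := by exact_mod_cast hm
  suffices h : ((∑ j ∈ s, m / f j : ℕ) : ℝ) < m by exact_mod_cast h
  calc ((∑ j ∈ s, m / f j : ℕ) : ℝ) ≤ ∑ j ∈ s, (m : ℝ) * (f j : ℝ)⁻¹ := by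
        push_cast
        exact sum_le_sum fun j _ => Nat.cast_div_le.trans_eq (div_eq_mul_inv _ _)
    _ ≤ m * (1 - (m : ℝ)⁻¹) := by
        rw [← mul_sum]
        exact mul_le_mul_of_nonneg_left (by linarith) hm'.le
    _ < m := by rw [mul_sub, mul_inv_cancel₀ hm'.ne']; linarith

lemma exists_forall_not_modEq_of_sum_div_lt (s : Finset ι) (f r : ι → ℕ) {m : ℕ}
    (hdvd : ∀ j ∈ s, f j ∣ m) (hlt : ∑ j ∈ s, m / f j < m) :
    ∃ x, ∀ j ∈ s, ¬ x ≡ r j [MOD f j] := by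
  classical
  have hm : 0 < m := by omega
  have hcard : #{x ∈ range m | ∃ j ∈ s, x ≡ r j [MOD f j]} < #(range m) :=
    calc #{x ∈ range m | ∃ j ∈ s, x ≡ r j [MOD f j]}
        ≤ #(s.biUnion fun j => {x ∈ range m | x ≡ r j [MOD f j]}) := by
          refine card_le_card fun x hx => ?_
          simp only [mem_filter, mem_biUnion] at hx ⊢
          obtain ⟨hxm, j, hj, hxj⟩ := hx
          exact ⟨j, hj, hxm, hxj⟩
      _ ≤ ∑ j ∈ s, #{x ∈ range m | x ≡ r j [MOD f j]} := card_biUnion_le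
      _ = ∑ j ∈ s, m / f j := sum_congr rfl fun j hj =>
          Nat.card_filter_range_modEq_of_dvd (Nat.pos_of_dvd_of_pos (hdvd j hj) hm) (hdvd j hj) _
      _ < #(range m) := by rwa [card_range]
  obtain ⟨x, hxm, hx⟩ := exists_mem_notMem_of_card_lt_card hcard
  exact ⟨x, fun j hj hxj => hx (mem_filter.2 ⟨hxm, j, hj, hxj⟩)⟩

theorem exists_residues_unique_modEq [DecidableEq ι] (f : ι → ℕ) (hpos : ∀ i, 0 < f i)
    (hchain : ∀ i j, f i ≤ f j → f i ∣ f j) (s : Finset ι)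
    (hs : ∑ i ∈ s, (f i : ℝ)⁻¹ ≤ 1) :
    ∃ r : ι → ℕ, ∀ i ∈ s, ∀ j ∈ s, ∀ t, t ≡ r i [MOD f i] → t ≡ r j [MOD f j] → i = j := by
  induction s using Finset.induction_on_max_value f with
  | empty => exact ⟨0, by simp⟩
  | insert a s ha hmax ih =>
    rw [sum_insert ha] at hs
    have hdvd : ∀ j ∈ s, f j ∣ f a := fun j hj => hchain j a (hmax j hj)
    obtain ⟨r, hr⟩ := ih (by linarith [inv_nonneg.2 (Nat.cast_nonneg (α := ℝ) (f a))])
    obtain ⟨x, hx⟩ := exists_forall_not_modEq_of_sum_div_lt s f r hdvd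
      (sum_div_lt_of_sum_inv_add_inv_le_one s f (hpos a) (by linarith))
    have hnew : ∀ j ∈ s, ∀ t, t ≡ x [MOD f a] → ¬ t ≡ r j [MOD f j] :=
      fun j hj t ht htj => hx j hj ((ht.of_dvd (hdvd j hj)).symm.trans htj)
    have hne : ∀ j ∈ s, j ≠ a := fun j hj hja => ha (hja ▸ hj)
    refine ⟨Function.update r a x, fun i hi j hj t hti htj => ?_⟩
    rcases mem_insert.1 hi with rfl | his <;> rcases mem_insert.1 hj with rfl | hjs
    · rfl
    · rw [Function.update_self] at hti
      rw [Function.update_of_ne (hne j hjs)] at htj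
      exact absurd htj (hnew j hjs t hti)
    · rw [Function.update_self] at htj
      rw [Function.update_of_ne (hne i his)] at hti
      exact absurd hti (hnew i his t htj)
    · rw [Function.update_of_ne (hne i his)] at hti
      rw [Function.update_of_ne (hne j hjs)] at htj
      exact hr i his j hjs t hti htj

end Residues

theorem exists_pinSched_of_sum_inv_le_one {n : ℕ} (hn : 0 < n) (f : Fin n → ℕ)
    (hpos : ∀ i, 0 < f i) (hchain : ∀ i j, f i ≤ f j → f i ∣ f j)
    (hsum : ∑ i, (f i : ℝ)⁻¹ ≤ 1) : ∃ S, PinSched f S := by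
  classical
  obtain ⟨r, hr⟩ := exists_residues_unique_modEq f hpos hchain univ hsum
  refine ⟨fun t => if h : ∃ i, t ≡ r i [MOD f i] then h.choose else ⟨0, hn⟩, fun i t => ?_⟩
  obtain ⟨s, hts, hst, hs⟩ := Nat.exists_modEq_of_le_lt_add t (r i) (hpos i)
  have hex : ∃ j, s ≡ r j [MOD f j] := ⟨i, hs⟩
  refine ⟨s, hts, hst, ?_⟩
  simp only [dif_pos hex]
  exact hr _ (mem_univ _) i (mem_univ _) s hex.choose_spec hs

lemma le_lastCut_add_of_pinSched {n : ℕ} {f : Fin n → ℕ} {S : ℕ → Fin n} (hS : PinSched f S)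
    (i : Fin n) (t : ℕ) : t ≤ lastCut S i t + f i := by
  rcases Nat.lt_or_ge t (f i) with hlt | hge
  · omega
  obtain ⟨s, hs₁, hs₂, hs₃⟩ := hS i (t - f i)
  have hs : s ≤ lastCut S i t :=
    Finset.le_sup (f := id) (mem_filter.2 ⟨mem_range.2 (by omega), hs₃⟩)
  omega

lemma bgtHeight_le_of_pinSched {n : ℕ} {f : Fin n → ℕ} {S : ℕ → Fin n} (hS : PinSched f S)
    (h : Fin n → ℝ) {i : Fin n} (hi : 0 ≤ h i) (t : ℕ) : bgtHeight h S i t ≤ f i * h i := by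
  have hcut : (t : ℝ) ≤ lastCut S i t + f i := by exact_mod_cast le_lastCut_add_of_pinSched hS i t
  rw [bgtHeight, mul_comm (f i : ℝ)]
  exact mul_le_mul_of_nonneg_left (by linarith) hi

lemma sum_inv_le_one_of_sum_le_mul {ι : Type*} [Fintype ι] (h f : ι → ℝ) (hpos : ∀ i, 0 < h i)
    (hf : ∀ i, ∑ j, h j ≤ f i * h i) : ∑ i, (f i)⁻¹ ≤ 1 := by
  set H := ∑ j, h j
  have hinv : ∀ i, (f i)⁻¹ ≤ h i / H := fun i => by
    have hH : 0 < H := (hpos i).trans_le (single_le_sum (fun j _ => (hpos j).le) (mem_univ i))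
    have hfi : 0 < f i := pos_of_mul_pos_left (hH.trans_le (hf i)) (hpos i).le
    rw [inv_le_comm₀ hfi (div_pos (hpos i) hH), inv_div, div_le_iff₀ (hpos i)]
    exact hf i
  calc ∑ i, (f i)⁻¹ ≤ ∑ i, h i / H := sum_le_sum fun i _ => hinv i
    _ = H / H := by rw [sum_div]
    _ ≤ 1 := div_self_le_one H

/-- For any discrete BGT instance with total growth rate `H = ∑ h i`, there is a schedule
in which bamboo `bᵢ` is cut in every window of `fᵢ` consecutive days, where the `fᵢ` are
powers of `2` with `fᵢ·hᵢ ≤ 2H`; consequently every bamboo's height stays at most `2H`,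
so `OPT ≤ 2H`. -/
theorem bgt_opt_le_two_H (n : ℕ) (hn : 1 ≤ n) (h : Fin n → ℝ) (hpos : ∀ i, 0 < h i) :
    ∃ (S : ℕ → Fin n) (f : Fin n → ℕ),
      (∀ i, ∃ k : ℕ, f i = 2 ^ k) ∧
      (∀ i, (f i : ℝ) * h i ≤ 2 * ∑ j, h j) ∧
      PinSched f S ∧
      (∀ (i : Fin n) (t : ℕ), bgtHeight h S i t ≤ 2 * ∑ j, h j) := by
  set H := ∑ j, h j
  have hratio : ∀ i, 1 ≤ 2 * H / h i := fun i => by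
    rw [le_div_iff₀ (hpos i)]
    linarith [single_le_sum (fun j _ => (hpos j).le) (mem_univ i), hpos i]
  choose k hk using fun i => exists_nat_pow_near (hratio i) one_lt_two
  have hupper : ∀ i, ((2 ^ k i : ℕ) : ℝ) * h i ≤ 2 * H := fun i => by
    push_cast
    exact (le_div_iff₀ (hpos i)).1 (hk i).1
  have hlower : ∀ i, H ≤ ((2 ^ k i : ℕ) : ℝ) * h i := fun i => by
    have := (div_lt_iff₀ (hpos i)).1 (hk i).2
    push_cast
    rw [pow_succ] at this
    linarith
  have hchain : ∀ i j, 2 ^ k i ≤ 2 ^ k j → 2 ^ k i ∣ 2 ^ k j := fun i j hij =>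
    (Nat.pow_dvd_pow_iff_le_right one_lt_two).2 ((Nat.pow_le_pow_iff_right one_lt_two).1 hij)
  obtain ⟨S, hS⟩ := exists_pinSched_of_sum_inv_le_one hn (fun i => 2 ^ k i) (fun i => by positivity)
    hchain (sum_inv_le_one_of_sum_le_mul h _ hpos hlower)
  exact ⟨S, fun i => 2 ^ k i, fun i => ⟨k i, rfl⟩, hupper, hS, fun i t =>
    (bgtHeight_le_of_pinSched hS h (hpos i).le t).trans (hupper i)⟩
end

section
/- For K ∈ {1, 2} and all δ ∈ [0, 3], the quantity 1/(1+δ) + (√(2K)/3)·(δ/√(1+δ))·(1/(1+δ) + (ln 2)/K) is at most 1, with equality exactly at δ = 0. -/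
/-!
Put `s = √(1 + δ) ∈ [1, 2]`. Clearing denominators, the left-hand side minus `1` equals
`δ / s³ · (c L s² - s + c)` with `c = √(2K)/3` and `L = ln 2 / K`. The quadratic factor is convex
in `s`, so it is negative on `[1, 2]` as soon as it is negative at `s = 1` and `s = 2`, which is a
numerical check for `K = 1` and `K = 2`. Hence the difference is `≤ 0`, and it vanishes exactly
when `δ = 0`.
-/

open Real

lemma quadratic_neg_of_neg_at_endpoints {a b c p q x : ℝ} (ha : 0 ≤ a) (hpx : p ≤ x)
    (hxq : x ≤ q) (hp : a * p ^ 2 + b * p + c < 0) (hq : a * q ^ 2 + b * q + c < 0) :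
    a * x ^ 2 + b * x + c < 0 := by
  have hconvex : (q - p) * (a * x ^ 2 + b * x + c)
      = (q - x) * (a * p ^ 2 + b * p + c) + (x - p) * (a * q ^ 2 + b * q + c)
        - a * ((x - p) * (q - x)) * (q - p) := by ring
  rcases hpx.eq_or_lt with rfl | hpx'
  · exact hp
  have hchord : (q - x) * (a * p ^ 2 + b * p + c) + (x - p) * (a * q ^ 2 + b * q + c) < 0 := by
    nlinarith [mul_nonneg (sub_nonneg.2 hxq) (neg_nonneg.2 hp.le)]
  have hcurv : 0 ≤ a * ((x - p) * (q - x)) * (q - p) := by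
    have := mul_nonneg ha (mul_nonneg (sub_nonneg.2 hpx) (sub_nonneg.2 hxq))
    exact mul_nonneg this (by linarith)
  exact neg_of_mul_neg_right (a := q - p) (by rw [hconvex]; linarith) (by linarith)

lemma key_expression_sub_one_eq_mul_quadratic (c L δ : ℝ) (hδ : -1 < δ) :
    1 / (1 + δ) + c * (δ / √(1 + δ)) * (1 / (1 + δ) + L) - 1
      = δ / √(1 + δ) ^ 3 * (c * L * √(1 + δ) ^ 2 - √(1 + δ) + c) := by
  have hs : √(1 + δ) ≠ 0 := (sqrt_pos.2 (by linarith)).ne'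
  have hsq : √(1 + δ) ^ 2 = 1 + δ := sq_sqrt (by linarith)
  generalize √(1 + δ) = s at hs hsq ⊢
  obtain rfl : δ = s ^ 2 - 1 := by linarith
  field_simp
  ring

lemma key_inequality_of_neg_at_endpoints {c L δ : ℝ} (hcL : 0 ≤ c * L)
    (h1 : c * L - 1 + c < 0) (h2 : c * L * 4 - 2 + c < 0) (h0 : 0 ≤ δ) (h3 : δ ≤ 3) :
    (1 / (1 + δ) + c * (δ / √(1 + δ)) * (1 / (1 + δ) + L) ≤ 1) ∧
    (1 / (1 + δ) + c * (δ / √(1 + δ)) * (1 / (1 + δ) + L) = 1 ↔ δ = 0) := by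
  set s := √(1 + δ)
  have hsq : s ^ 2 = 1 + δ := sq_sqrt (by linarith)
  have hs : 0 ≤ s := sqrt_nonneg _
  have hquad : c * L * s ^ 2 + (-1) * s + c < 0 :=
    quadratic_neg_of_neg_at_endpoints hcL (p := 1) (q := 2) (by nlinarith) (by nlinarith)
      (by linarith) (by linarith)
  have hfactor : 0 ≤ δ / s ^ 3 := by positivity
  have hdiff := key_expression_sub_one_eq_mul_quadratic c L δ (by linarith)
  refine ⟨by nlinarith, ⟨fun h => ?_, fun h => by simp [h]⟩⟩
  have hzero : δ / s ^ 3 * (c * L * s ^ 2 - s + c) = 0 := by linarith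
  rcases mul_eq_zero.1 hzero with hδ | hq
  · have hs0 : s ≠ 0 := by nlinarith
    simpa [hs0] using hδ
  · linarith

/-- For `K ∈ {1,2}` and `δ ∈ [0,3]`,
`1/(1+δ) + (√(2K)/3)·(δ/√(1+δ))·(1/(1+δ) + ln2/K) ≤ 1`, with equality iff `δ = 0`. -/
theorem main_algorithm_key_inequality (K : ℝ) (hK : K = 1 ∨ K = 2)
    (δ : ℝ) (h0 : 0 ≤ δ) (h3 : δ ≤ 3) :
    (1 / (1 + δ) + (Real.sqrt (2 * K) / 3) * (δ / Real.sqrt (1 + δ)) *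
        (1 / (1 + δ) + Real.log 2 / K) ≤ 1) ∧
    (1 / (1 + δ) + (Real.sqrt (2 * K) / 3) * (δ / Real.sqrt (1 + δ)) *
        (1 / (1 + δ) + Real.log 2 / K) = 1 ↔ δ = 0) := by
  have hlog : log 2 < 0.7 := log_two_lt_d9.trans (by norm_num)
  have hlog0 : 0 < log 2 := log_pos one_lt_two
  rcases hK with rfl | rfl
  · have hsqrt : √(2 * 1) < 1.42 := (sqrt_lt' (by norm_num)).2 (by norm_num)
    have hsqrt0 : 0 ≤ √(2 * 1) := sqrt_nonneg _
    exact key_inequality_of_neg_at_endpoints (by positivity) (by nlinarith) (by nlinarith) h0 h3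
  · have hsqrt : √(2 * 2) = 2 :=
      (sqrt_eq_iff_mul_self_eq (by norm_num) (by norm_num)).2 (by norm_num)
    rw [hsqrt]
    exact key_inequality_of_neg_at_endpoints (by positivity) (by linarith) (by linarith) h0 h3
end

section
/- For 0 < x < 1 and 0 < ε < min(x, 1−x), on the discrete BGT instance (x, ε) the strategy Reduce-Fastest(x) never cuts bamboo b_2, so b_2's height tends to infinity, while OPT = 2x is finite. Hence Reduce-Fastest(x) has unbounded approximation ratio for every x < 1 (with H normalized, here H = x + ε). -/
/-- Last cut day of bamboo `i` before day `t` (`0` if never cut); values of `S` that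
are not bamboo indices mean that no bamboo is cut that day. -/
def lastCutN (S : ℕ → ℕ) (i t : ℕ) : ℕ :=
  ((Finset.range t).filter (fun s => S s = i)).sup id

noncomputable def bgtHeightN (h : ℕ → ℝ) (S : ℕ → ℕ) (i t : ℕ) : ℝ :=
  h i * ((t : ℝ) - (lastCutN S i t : ℝ))

/-!
Reduce-Fastest(x) cuts `b₁` (index `0`) every day: after any day its height is at least its rate
`x ≥ x·(x + ε)`, because `x + ε ≤ 1`. So `b₂` (index `1`) is never cut and grows like `ε·t`.
Cutting the two bamboos alternately keeps every height at most twice its rate, hence at most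
`2x`; conversely, keeping `b₁` strictly below `2x` forces cutting it every day, and then `b₂`
again grows without bound.
-/

open Filter

section LastCut

variable (S : ℕ → ℕ) {i t : ℕ}

lemma lastCutN_lt (ht : 0 < t) : lastCutN S i t < t :=
  (Finset.sup_lt_iff ht).mpr fun _ hs => (Finset.mem_filter.mp hs).1 |> Finset.mem_range.mp

lemma le_lastCutN {s : ℕ} (hs : s < t) (hSs : S s = i) : s ≤ lastCutN S i t :=
  Finset.le_sup (f := id) (Finset.mem_filter.mpr ⟨Finset.mem_range.mpr hs, hSs⟩)

lemma lastCutN_succ_lt_of_ne (ht : 0 < t) (hSt : S t ≠ i) : lastCutN S i (t + 1) < t := by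
  refine (Finset.sup_lt_iff ht).mpr fun s hs => ?_
  obtain ⟨hst, hSs⟩ := Finset.mem_filter.mp hs
  have : s ≠ t := by rintro rfl; exact hSt hSs
  exact lt_of_le_of_ne (Nat.lt_succ_iff.mp (Finset.mem_range.mp hst)) this

lemma lastCutN_eq_zero_of_forall_ne (hS : ∀ s, 0 < s → S s ≠ i) : lastCutN S i t = 0 :=
  Nat.eq_zero_of_le_zero <| Finset.sup_le fun s hs =>
    Nat.le_zero.mpr <| by_contra fun hs0 =>
      hS s (Nat.pos_of_ne_zero hs0) (Finset.mem_filter.mp hs).2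

lemma le_lastCutN_mod_add {n : ℕ} (hi : i < n) : t ≤ lastCutN (· % n) i t + n := by
  rcases le_or_gt t i with hti | hit
  · omega
  have hn : 0 < n := by omega
  have hdiv := Nat.lt_div_mul_add (a := t - 1 - i) hn
  have hlast : i + (t - 1 - i) / n * n ≤ lastCutN (· % n) i t :=
    le_lastCutN _ (by have := Nat.div_mul_le_self (t - 1 - i) n; omega)
      (by simp only [Nat.add_mul_mod_self_right, Nat.mod_eq_of_lt hi])
  omega

end LastCut

section Height

variable {h : ℕ → ℝ} {S : ℕ → ℕ} {i t : ℕ}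

lemma le_bgtHeightN (hh : 0 ≤ h i) (ht : 0 < t) : h i ≤ bgtHeightN h S i t := by
  have : lastCutN S i t + 1 ≤ t := lastCutN_lt S ht
  have : (lastCutN S i t : ℝ) + 1 ≤ t := by exact_mod_cast this
  unfold bgtHeightN
  nlinarith

lemma bgtHeightN_mod_le {n : ℕ} (hi : i < n) (hh : 0 ≤ h i) :
    bgtHeightN h (· % n) i t ≤ n * h i := by
  have : (t : ℝ) ≤ lastCutN (· % n) i t + n := by exact_mod_cast le_lastCutN_mod_add hi
  unfold bgtHeightN
  nlinarith

lemma eq_of_bgtHeightN_succ_lt_two_mul (hh : 0 < h i) (ht : 0 < t)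
    (hlt : bgtHeightN h S i (t + 1) < 2 * h i) : S t = i := by
  by_contra hSt
  have : lastCutN S i (t + 1) + 1 ≤ t := lastCutN_succ_lt_of_ne S ht hSt
  have : (lastCutN S i (t + 1) : ℝ) + 1 ≤ t := by exact_mod_cast this
  unfold bgtHeightN at hlt
  push_cast at hlt
  nlinarith

lemma tendsto_bgtHeightN_of_forall_ne (hh : 0 < h i) (hS : ∀ s, 0 < s → S s ≠ i) :
    Tendsto (fun t => bgtHeightN h S i t) atTop atTop := by
  simp only [bgtHeightN, lastCutN_eq_zero_of_forall_ne S hS, CharP.cast_eq_zero, sub_zero]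
  exact tendsto_natCast_atTop_atTop.const_mul_atTop hh

end Height

theorem reduce_fastest_unbounded_general (x ε : ℝ) (hx0 : 0 < x)
    (hε0 : 0 < ε) (hεm : ε < min x (1 - x)) (S : ℕ → ℕ) :
    ∀ h : ℕ → ℝ, h = (fun i => if i = 0 then x else if i = 1 then ε else 0) →
    (∀ t, 1 ≤ t →
        (x * (x + ε) ≤ bgtHeightN h S 0 t → S t = 0) ∧
        (bgtHeightN h S 0 t < x * (x + ε) ∧ x * (x + ε) ≤ bgtHeightN h S 1 t →
          S t = 1) ∧
        (bgtHeightN h S 0 t < x * (x + ε) ∧ bgtHeightN h S 1 t < x * (x + ε) →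
          S t ≠ 0 ∧ S t ≠ 1)) →
    (∀ t, 1 ≤ t → S t = 0) ∧
    Filter.Tendsto (fun t => bgtHeightN h S 1 t) Filter.atTop Filter.atTop ∧
    (∃ S' : ℕ → ℕ, ∀ t, bgtHeightN h S' 0 t ≤ 2 * x ∧ bgtHeightN h S' 1 t ≤ 2 * x) ∧
    (∀ S'' : ℕ → ℕ, ¬ (∀ t, bgtHeightN h S'' 0 t < 2 * x ∧ bgtHeightN h S'' 1 t < 2 * x)) := by
  intro h hh hS
  have h0 : h 0 = x := by simp [hh]
  have h1 : h 1 = ε := by simp [hh]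
  obtain ⟨hεx, hεx1⟩ := lt_min_iff.mp hεm
  have cuts_first : ∀ t, 1 ≤ t → S t = 0 := fun t ht =>
    (hS t ht).1 <| calc
      x * (x + ε) ≤ x := mul_le_of_le_one_right hx0.le (by linarith)
      _ ≤ _ := h0 ▸ le_bgtHeightN (h0 ▸ hx0.le) ht
  have second_unbounded_of_cuts_first (S' : ℕ → ℕ) (hS' : ∀ t, 1 ≤ t → S' t = 0) :
      Tendsto (fun t => bgtHeightN h S' 1 t) atTop atTop :=
    tendsto_bgtHeightN_of_forall_ne (h1 ▸ hε0) fun s hs => by simp [hS' s hs]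
  refine ⟨cuts_first, second_unbounded_of_cuts_first S cuts_first,
    ⟨(· % 2), fun t => ⟨?_, ?_⟩⟩, fun S'' hS'' => ?_⟩
  · calc bgtHeightN h (· % 2) 0 t ≤ (2 : ℕ) * h 0 := bgtHeightN_mod_le two_pos (h0 ▸ hx0.le)
      _ = 2 * x := by rw [h0, Nat.cast_ofNat]
  · calc bgtHeightN h (· % 2) 1 t ≤ (2 : ℕ) * h 1 :=
          bgtHeightN_mod_le one_lt_two (h1 ▸ hε0.le)
      _ ≤ 2 * x := by rw [h1, Nat.cast_ofNat]; linarith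
  · have cuts_first_of_below : ∀ t, 1 ≤ t → S'' t = 0 := fun t ht =>
      eq_of_bgtHeightN_succ_lt_two_mul (h0 ▸ hx0) ht (h0 ▸ (hS'' (t + 1)).1)
    obtain ⟨t, ht⟩ :=
      ((second_unbounded_of_cuts_first S'' cuts_first_of_below).eventually_ge_atTop (2 * x)).exists
    exact (hS'' t).2.not_ge ht

/-- On the instance `(x, ε)` with `0 < x < 1`, `0 < ε < min(x, 1-x)` and `H = x + ε`,
any Reduce-Fastest(x) schedule (cut the fastest-growing bamboo among those of height
`≥ x·H`, cut nothing if none qualifies) always cuts `b₁` and never cuts `b₂`, so the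
height of `b₂` tends to infinity, while the optimum `2x` is finite: some schedule keeps
both bamboos at height `≤ 2x`, and no schedule keeps both strictly below `2x`.
Hence Reduce-Fastest(x) has unbounded approximation ratio for `x < 1`. -/
theorem reduce_fastest_unbounded (x ε : ℝ) (hx0 : 0 < x) (hx1 : x < 1)
    (hε0 : 0 < ε) (hεm : ε < min x (1 - x)) (S : ℕ → ℕ) :
    ∀ h : ℕ → ℝ, h = (fun i => if i = 0 then x else if i = 1 then ε else 0) →
    (∀ t, 1 ≤ t →
        (x * (x + ε) ≤ bgtHeightN h S 0 t → S t = 0) ∧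
        (bgtHeightN h S 0 t < x * (x + ε) ∧ x * (x + ε) ≤ bgtHeightN h S 1 t →
          S t = 1) ∧
        (bgtHeightN h S 0 t < x * (x + ε) ∧ bgtHeightN h S 1 t < x * (x + ε) →
          S t ≠ 0 ∧ S t ≠ 1)) →
    (∀ t, 1 ≤ t → S t = 0) ∧
    Filter.Tendsto (fun t => bgtHeightN h S 1 t) Filter.atTop Filter.atTop ∧
    (∃ S' : ℕ → ℕ, ∀ t, bgtHeightN h S' 0 t ≤ 2 * x ∧ bgtHeightN h S' 1 t ≤ 2 * x) ∧
    (∀ S'' : ℕ → ℕ, ¬ (∀ t, bgtHeightN h S'' 0 t < 2 * x ∧ bgtHeightN h S'' 1 t < 2 * x)) :=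
  reduce_fastest_unbounded_general x ε hx0 hε0 hεm S
end

section
/- In continuous BGT, for any schedule and any subset V' of the bamboo locations, the maximum height ever reached by some bamboo is at least h_min(V')·MST(V'), where h_min(V') is the minimum growth rate among points of V' and MST(V') is the minimum weight of a spanning tree on V'. -/
/-!
Let `K` be the largest among the first-visit indices of the points of `V'`, and `v = visits K`.
Every point of `V'` is visited within the first `K` steps, so by the triangle inequality the walk
`visits 0, …, visits K` contains a spanning tree of `V'` of weight at most its length, which is
at most `τ K`. The bamboo at `v` is not cut before time `τ K`, so it reaches height
`h v * τ K ≥ h_min(V') · MST(V')`.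
-/

noncomputable def lastVisit {n : ℕ} (τ : ℕ → ℝ) (visits : ℕ → Fin n) (i : Fin n) (t : ℝ) : ℝ :=
  sSup {s : ℝ | ∃ j : ℕ, visits j = i ∧ τ j = s ∧ s ≤ t}

noncomputable def contHeight {n : ℕ} (h : Fin n → ℝ) (τ : ℕ → ℝ) (visits : ℕ → Fin n)
    (i : Fin n) (t : ℝ) : ℝ :=
  h i * (t - lastVisit τ visits i t)

/-- The set of total weights of spanning trees of `V'` (with edge weights `d`):
edge sets over `V'` with `|V'| - 1` edges connecting all of `V'`. -/
def treeWeights {n : ℕ} (d : Fin n → Fin n → ℝ) (V' : Finset (Fin n)) : Set ℝ :=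
  { w | ∃ E : Finset (Fin n × Fin n),
      (∀ e ∈ E, e.1 ∈ V' ∧ e.2 ∈ V') ∧
      E.card = V'.card - 1 ∧
      (∀ a ∈ V', ∀ b ∈ V',
        Relation.ReflTransGen (fun u v => (u, v) ∈ E ∨ (v, u) ∈ E) a b) ∧
      w = ∑ e ∈ E, d e.1 e.2 }

open Finset

section Schedule

variable {n : ℕ} {h : Fin n → ℝ} {τ : ℕ → ℝ} {visits : ℕ → Fin n} {i : Fin n}
  {t B : ℝ}

theorem lastVisit_le (ht : 0 ≤ t) : lastVisit τ visits i t ≤ t :=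
  Real.sSup_le (fun _ ⟨_, _, _, hs⟩ => hs) ht

theorem contHeight_nonneg (hh : 0 ≤ h i) (ht : 0 ≤ t) : 0 ≤ contHeight h τ visits i t :=
  mul_nonneg hh (sub_nonneg.2 (lastVisit_le ht))

-- Before the first cut `lastVisit` is `sSup ∅ = 0`: the bamboo has been growing since time `0`.
theorem contHeight_eq_of_forall_visit_gt (hvisit : ∀ j, visits j = i → t < τ j) :
    contHeight h τ visits i t = h i * t := by
  have hempty : {s : ℝ | ∃ j, visits j = i ∧ τ j = s ∧ s ≤ t} = ∅ :=
    Set.eq_empty_of_forall_notMem fun _ ⟨j, hj, hs, hst⟩ =>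
      (hvisit j hj).not_ge (hs ▸ hst)
  rw [contHeight, lastVisit, hempty, Real.sSup_empty, sub_zero]

theorem mul_le_of_forall_visit_ge {T : ℝ} (hh : 0 ≤ h i)
    (hB : ∀ t, 0 ≤ t → contHeight h τ visits i t ≤ B) (hvisit : ∀ j, visits j = i → T ≤ τ j) :
    h i * T ≤ B := by
  have hB0 : 0 ≤ B := (contHeight_nonneg hh le_rfl).trans (hB 0 le_rfl)
  refine le_of_forall_lt_imp_le_of_dense fun x hx => ?_
  rcases le_or_gt x 0 with hx0 | hx0
  · exact hx0.trans hB0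
  have hhi : 0 < h i := hh.lt_of_ne fun h0 => by simp [← h0] at hx; linarith
  have hxT : x / h i < T := (div_lt_iff₀' hhi).2 hx
  calc x = h i * (x / h i) := (mul_div_cancel₀ x hhi.ne').symm
    _ = contHeight h τ visits i (x / h i) :=
      (contHeight_eq_of_forall_visit_gt fun j hj => hxT.trans_le (hvisit j hj)).symm
    _ ≤ B := hB _ (div_nonneg hx0.le hh)

theorem exists_visit_of_contHeight_le (hh : 0 < h i)
    (hB : ∀ t, 0 ≤ t → contHeight h τ visits i t ≤ B) : ∃ j, visits j = i := by
  by_contra! hnever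
  have := mul_le_of_forall_visit_ge (T := (B + 1) / h i) hh.le hB fun j hj => (hnever j hj).elim
  rw [mul_div_cancel₀ _ hh.ne'] at this
  linarith

end Schedule

section Walk

variable {α : Type*} {d : α → α → ℝ}

theorem le_sum_Ico_of_triangle (dself : ∀ i, d i i = 0)
    (dtri : ∀ i j k, d i k ≤ d i j + d j k) (p : ℕ → α) {a b : ℕ} (hab : a ≤ b) :
    d (p a) (p b) ≤ ∑ i ∈ Ico a b, d (p i) (p (i + 1)) := by
  induction b, hab using Nat.le_induction with
  | base => simp [dself]
  | succ b hab ih =>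
    rw [sum_Ico_succ_top hab]
    linarith [dtri (p a) (p b) (p (b + 1))]

theorem sum_range_le_of_travel {τ : ℕ → ℝ} {p : ℕ → α} (hτ0 : τ 0 = 0)
    (hmove : ∀ k, τ k + d (p k) (p (k + 1)) ≤ τ (k + 1)) (m : ℕ) :
    ∑ i ∈ range m, d (p i) (p (i + 1)) ≤ τ m := by
  calc ∑ i ∈ range m, d (p i) (p (i + 1)) ≤ ∑ i ∈ range m, (τ (i + 1) - τ i) :=
        sum_le_sum fun k _ => by linarith [hmove k]
    _ = τ m := by rw [sum_range_sub, hτ0, sub_zero]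

end Walk

section SpanningTree

variable {n : ℕ} {d : Fin n → Fin n → ℝ}

theorem treeWeights_bddBelow (dnonneg : ∀ i j, 0 ≤ d i j) (V : Finset (Fin n)) :
    BddBelow (treeWeights d V) :=
  ⟨0, fun _ ⟨_, _, _, _, hw⟩ => hw ▸ sum_nonneg fun _ _ => dnonneg _ _⟩

theorem zero_mem_treeWeights_singleton (x : Fin n) : (0 : ℝ) ∈ treeWeights d {x} :=
  ⟨∅, by simp, by simp, fun a ha b hb => by simp_all [Relation.ReflTransGen.refl], by simp⟩

theorem add_mem_treeWeights_insert {V : Finset (Fin n)} {w : ℝ} (hw : w ∈ treeWeights d V)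
    {u x : Fin n} (hu : u ∈ V) (hx : x ∉ V) : w + d u x ∈ treeWeights d (insert x V) := by
  obtain ⟨E, hEV, hcard, hconn, rfl⟩ := hw
  have hnew : (u, x) ∉ E := fun he => hx (hEV _ he).2
  set R := fun a b => (a, b) ∈ insert (u, x) E ∨ (b, a) ∈ insert (u, x) E
  have : Std.Symm R := ⟨fun _ _ hab => hab.symm⟩
  have hold : ∀ a ∈ V, ∀ b ∈ V, Relation.ReflTransGen R a b := fun a ha b hb =>
    Relation.ReflTransGen.mono (p := R)
      (fun _ _ hab => Or.imp mem_insert_of_mem mem_insert_of_mem hab) a b (hconn a ha b hb)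
  have hto_u : ∀ a ∈ insert x V, Relation.ReflTransGen R a u := by
    intro a ha
    rcases mem_insert.1 ha with rfl | ha
    · exact .single (Or.inr (mem_insert_self _ _))
    · exact hold a ha u hu
  refine ⟨insert (u, x) E, ?_, ?_, ?_, ?_⟩
  · intro e he
    rcases mem_insert.1 he with rfl | he
    · exact ⟨mem_insert_of_mem hu, mem_insert_self _ _⟩
    · exact ⟨mem_insert_of_mem (hEV e he).1, mem_insert_of_mem (hEV e he).2⟩
  · rw [card_insert_of_notMem hnew, hcard, card_insert_of_notMem hx]
    have := card_pos.2 ⟨u, hu⟩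
    omega
  · exact fun a ha b hb => (hto_u a ha).trans (symm (hto_u b hb))
  · rw [sum_insert hnew, add_comm]

-- The tree joins each point to the previously visited point of `S`, along the walk between them.
theorem exists_mem_treeWeights_le_sum_range (dnonneg : ∀ i j, 0 ≤ d i j)
    (dself : ∀ i, d i i = 0) (dtri : ∀ i j k, d i k ≤ d i j + d j k) (p : ℕ → Fin n)
    (S : Finset ℕ) (hS : S.Nonempty) (hinj : Set.InjOn p S) :
    ∃ w ∈ treeWeights d (S.image p), w ≤ ∑ i ∈ range (S.max' hS), d (p i) (p (i + 1)) := by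
  induction S using induction_on_max with
  | empty => exact absurd hS not_nonempty_empty
  | insert a s hlt ih =>
    have hmax : (insert a s).max' hS = a :=
      le_antisymm
        (max'_le _ _ _ fun y hy => (mem_insert.1 hy).elim le_of_eq fun hy => (hlt y hy).le)
        (le_max' _ _ (mem_insert_self a s))
    rw [hmax, image_insert]
    rcases s.eq_empty_or_nonempty with rfl | hs
    · exact ⟨0, zero_mem_treeWeights_singleton _, sum_nonneg fun _ _ => dnonneg _ _⟩
    obtain ⟨w, hw, hwle⟩ := ih hs (hinj.mono (subset_insert a s))
    have hM : s.max' hs < a := hlt _ (max'_mem s hs)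
    have hpa : p a ∉ s.image p := fun hmem => by
      obtain ⟨j, hj, hja⟩ := mem_image.1 hmem
      exact (hlt j hj).ne (hinj (mem_insert_of_mem hj) (mem_insert_self a s) hja)
    refine ⟨_, add_mem_treeWeights_insert hw (mem_image_of_mem p (max'_mem s hs)) hpa, ?_⟩
    rw [← sum_range_add_sum_Ico _ hM.le]
    exact add_le_add hwle (le_sum_Ico_of_triangle dself dtri p hM.le)

end SpanningTree

/-- Continuous BGT lower bound: for any schedule and any nonempty subset `V'` of the
points, if `B` bounds all bamboo heights at all times then
`B ≥ h_min(V') · MST(V')`, where `MST(V')` is the minimum spanning-tree weight of `V'`. -/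
theorem continuous_bgt_mst_lower_bound (n : ℕ)
    (d : Fin n → Fin n → ℝ)
    (dnonneg : ∀ i j, 0 ≤ d i j) (dself : ∀ i, d i i = 0)
    (dtri : ∀ i j k, d i k ≤ d i j + d j k)
    (h : Fin n → ℝ) (hpos : ∀ i, 0 < h i)
    (V' : Finset (Fin n)) (hne : V'.Nonempty)
    (visits : ℕ → Fin n) (τ : ℕ → ℝ)
    (hτ0 : τ 0 = 0)
    (hmove : ∀ k, τ k + d (visits k) (visits (k + 1)) ≤ τ (k + 1))
    (B : ℝ) (hB : ∀ (i : Fin n) (t : ℝ), 0 ≤ t → contHeight h τ visits i t ≤ B) :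
    (V'.inf' hne h) * sInf (treeWeights d V') ≤ B := by
  have hτmono : Monotone τ :=
    monotone_nat_of_le_succ fun k => by linarith [hmove k, dnonneg (visits k) (visits (k + 1))]
  have hvisited v := exists_visit_of_contHeight_le (hpos v) (hB v)
  let firstVisit v := Nat.find (hvisited v)
  have hfirst v : visits (firstVisit v) = v := Nat.find_spec (hvisited v)
  set S := V'.image firstVisit
  have hS : S.Nonempty := hne.image _
  have hSV : S.image visits = V' := by simp [S, image_image, Function.comp_def, hfirst]
  have hinj : Set.InjOn visits S := by
    intro j hj k hk hjk
    obtain ⟨a, -, rfl⟩ := mem_image.1 hj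
    obtain ⟨b, -, rfl⟩ := mem_image.1 hk
    rw [hfirst, hfirst] at hjk
    rw [hjk]
  set K := S.max' hS
  obtain ⟨v, hvV, hvK⟩ := mem_image.1 (max'_mem S hS)
  obtain ⟨w, hw, hwK⟩ := exists_mem_treeWeights_le_sum_range dnonneg dself dtri visits S hS hinj
  have hMST : sInf (treeWeights d V') ≤ τ K :=
    (csInf_le (treeWeights_bddBelow dnonneg V') (hSV ▸ hw)).trans
      (hwK.trans (sum_range_le_of_travel hτ0 hmove K))
  have hheight : h v * τ K ≤ B :=
    mul_le_of_forall_visit_ge (hpos v).le (hB v) fun j hj =>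
      hτmono (hvK.symm.trans_le (Nat.find_min' _ hj))
  have hmin : 0 ≤ V'.inf' hne h := (le_inf'_iff hne h).2 fun i _ => (hpos i).le
  calc V'.inf' hne h * sInf (treeWeights d V') ≤ V'.inf' hne h * τ K := by gcongr
    _ ≤ h v * τ K := by gcongr; exacts [hτ0 ▸ hτmono K.zero_le, inf'_le h hvV]
    _ ≤ B := hheight
end

section
/- Consider the spiral instance V* with groups G_1,...,G_{(log n)/3} where |G_i| = n/2^i, each point of G_i has growth rate h_i = (3−ε)·2^i/(n·log n), consecutive points are at distance d_1 = n^{−2/3}, and the growth rates sum to at most 1. Then every schedule lets some bamboo in ∪G_i grow to height at least d_1/2. Specifically: if every bamboo of G_i is always kept below height d_1/2, each point of G_i must be revisited within travel distance d_1·(n log n)/2^{i+2}, forcing an effective service rate of at least 2^{i+2}/(n log n) per point; summing over all groups gives Σ_i (2^{i+2}/(n log n))·(n/2^i) = 4/3 > 1, a contradiction with total rate budget 1. -/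
/-!
Suppose every bamboo of `⋃ G i` stays below `d₁ / 2`, i.e. `2 h v * (t - lastVisit v t) < d₁`
at all times. Charge each step of the robot to the point where it ends. A step arriving at `v`
from elsewhere takes time at least `d₁`, which pays for the less than `d₁ / (2 h v)` time elapsed
since the previous visit to `v`; a step staying at `v` pays for itself since `2 h v ≤ 1`. So by
stop `K` the point `v` has been charged at least `2 h v * τ K - d₁`, while all charges add up to
`τ K`. As `∑ 2 h v = 2 (3 - ε) / 3 > 1` and frequent revisits force `τ` to be unbounded, this is
impossible.
-/

open Finset

section Schedule

variable {α : Type*} [DecidableEq α] (τ : ℕ → ℝ) (visits : ℕ → α)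

/-- The base value `0` plays the role of `sSup ∅ = 0` in `lastVisit`; it is also right when
`visits 0 = v`, because every schedule here starts with `τ 0 = 0`. -/
def latestVisit (v : α) : ℕ → ℝ
  | 0 => 0
  | K + 1 => if visits (K + 1) = v then τ (K + 1) else latestVisit v K

noncomputable def servedTime (v : α) (K : ℕ) : ℝ :=
  ∑ k ∈ range K, if visits (k + 1) = v then τ (k + 1) - τ k else 0

variable {τ visits}

lemma servedTime_succ (v : α) (K : ℕ) :
    servedTime τ visits v (K + 1) =
      servedTime τ visits v K + if visits (K + 1) = v then τ (K + 1) - τ K else 0 :=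
  sum_range_succ _ _

lemma sum_servedTime [Fintype α] (K : ℕ) : ∑ v, servedTime τ visits v K = τ K - τ 0 := by
  simp only [servedTime]
  rw [sum_comm]
  simp only [sum_ite_eq, mem_univ, if_true]
  exact sum_range_sub τ K

lemma servedTime_nonneg (hmono : Monotone τ) (v : α) (K : ℕ) : 0 ≤ servedTime τ visits v K :=
  sum_nonneg fun k _ => by
    split_ifs
    exacts [sub_nonneg.2 (hmono k.le_succ), le_rfl]

lemma latestVisit_nonneg (hmono : Monotone τ) (hτ0 : τ 0 = 0) (v : α) (K : ℕ) :
    0 ≤ latestVisit τ visits v K := by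
  induction K with
  | zero => exact le_rfl
  | succ K ih =>
    simp only [latestVisit]
    split_ifs
    exacts [hτ0 ▸ hmono (Nat.zero_le _), ih]

lemma latestVisit_of_visits_eq (hτ0 : τ 0 = 0) {v : α} {K : ℕ} (hK : visits K = v) :
    latestVisit τ visits v K = τ K := by
  cases K with
  | zero => exact hτ0.symm
  | succ K => exact if_pos hK

lemma le_latestVisit (hmono : Monotone τ) (hτ0 : τ 0 = 0) {v : α} {j K : ℕ} (hjK : j ≤ K)
    (hj : visits j = v) : τ j ≤ latestVisit τ visits v K := by
  induction K with
  | zero =>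
    obtain rfl := Nat.le_zero.1 hjK
    exact (latestVisit_of_visits_eq hτ0 hj).ge
  | succ K ih =>
    rcases hjK.eq_or_lt with rfl | hlt
    · exact (latestVisit_of_visits_eq hτ0 hj).ge
    · simp only [latestVisit]
      split_ifs
      exacts [hmono hjK, ih (Nat.lt_succ_iff.1 hlt)]

lemma mul_latestVisit_le_servedTime (hmono : Monotone τ) (hτ0 : τ 0 = 0) {v : α} {c δ : ℝ}
    (hc : c ≤ 1) (hstep : ∀ k, visits k ≠ visits (k + 1) → τ k + δ ≤ τ (k + 1))
    (hgap : ∀ K, c * (τ (K + 1) - latestVisit τ visits v K) ≤ δ) (K : ℕ) :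
    c * latestVisit τ visits v K ≤ servedTime τ visits v K := by
  induction K with
  | zero => simp [latestVisit, servedTime]
  | succ K ih =>
    rw [servedTime_succ]
    simp only [latestVisit]
    split_ifs with hv
    · by_cases hK : visits K = v
      · rw [latestVisit_of_visits_eq hτ0 hK] at ih
        nlinarith [sub_nonneg.2 (hmono K.le_succ)]
      · linarith [hstep K fun h => hK (h.trans hv), hgap K]
    · simpa using ih

end Schedule

section Revisits

variable {n : ℕ} {τ : ℕ → ℝ} {visits : ℕ → Fin n} {v : Fin n}

lemma lastVisit_le_self {t : ℝ} (ht : 0 ≤ t) : lastVisit τ visits v t ≤ t :=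
  Real.sSup_le (fun _ ⟨_, _, _, hs⟩ => hs) ht

lemma lastVisit_le_latestVisit (hmono : Monotone τ) (hτ0 : τ 0 = 0) {t : ℝ} {K : ℕ}
    (ht : t < τ (K + 1)) : lastVisit τ visits v t ≤ latestVisit τ visits v K :=
  Real.sSup_le
    (fun _ ⟨_, hj, hjs, hst⟩ => hjs ▸
      le_latestVisit hmono hτ0 (Nat.lt_succ_iff.1 (hmono.reflect_lt (hjs ▸ hst.trans_lt ht))) hj)
    (latestVisit_nonneg hmono hτ0 v K)

variable {W : ℝ}

lemma pos_of_forall_sub_lastVisit_lt (hW : ∀ t, 0 ≤ t → t - lastVisit τ visits v t < W) : 0 < W :=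
  (sub_nonneg.2 (lastVisit_le_self le_rfl)).trans_lt (hW 0 le_rfl)

lemma sub_latestVisit_le (hmono : Monotone τ) (hτ0 : τ 0 = 0)
    (hW : ∀ t, 0 ≤ t → t - lastVisit τ visits v t < W) (K : ℕ) :
    τ (K + 1) - latestVisit τ visits v K ≤ W := by
  refine le_of_forall_lt_imp_le_of_dense fun a ha => ?_
  rcases lt_or_ge a 0 with ha0 | ha0
  · linarith [pos_of_forall_sub_lastVisit_lt hW]
  · have hlatest : 0 ≤ latestVisit τ visits v K := latestVisit_nonneg hmono hτ0 v K
    have hlast : lastVisit τ visits v (latestVisit τ visits v K + a) ≤ latestVisit τ visits v K :=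
      lastVisit_le_latestVisit hmono hτ0 (by linarith)
    linarith [hW _ (add_nonneg hlatest ha0)]

lemma not_bddAbove_range_of_revisits (hW : ∀ t, 0 ≤ t → t - lastVisit τ visits v t < W) :
    ¬ BddAbove (Set.range τ) := by
  rintro ⟨M, hM⟩
  have hlast : lastVisit τ visits v (max M 0 + W) ≤ max M 0 :=
    Real.sSup_le (fun _ ⟨j, _, hjs, _⟩ => hjs ▸ (hM ⟨j, rfl⟩).trans (le_max_left _ _))
      (le_max_right _ _)
  linarith [hW _ (add_nonneg (le_max_right M 0) (pos_of_forall_sub_lastVisit_lt hW).le)]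

lemma mul_le_servedTime_add (hmono : Monotone τ) (hτ0 : τ 0 = 0) {c δ : ℝ} (hc0 : 0 ≤ c)
    (hc1 : c ≤ 1) (hcW : c * W ≤ δ)
    (hstep : ∀ k, visits k ≠ visits (k + 1) → τ k + δ ≤ τ (k + 1))
    (hW : ∀ t, 0 ≤ t → t - lastVisit τ visits v t < W) (K : ℕ) :
    c * τ K ≤ servedTime τ visits v K + δ := by
  have hgap : ∀ K, c * (τ (K + 1) - latestVisit τ visits v K) ≤ δ := fun K =>
    (mul_le_mul_of_nonneg_left (sub_latestVisit_le hmono hτ0 hW K) hc0).trans hcW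
  calc c * τ K ≤ c * τ (K + 1) := mul_le_mul_of_nonneg_left (hmono K.le_succ) hc0
    _ = c * latestVisit τ visits v K + c * (τ (K + 1) - latestVisit τ visits v K) := by ring
    _ ≤ servedTime τ visits v K + δ :=
      add_le_add (mul_latestVisit_le_servedTime hmono hτ0 hc1 hstep hgap K) (hgap K)

end Revisits

theorem exists_le_mul_sub_lastVisit_of_one_lt_sum {n : ℕ} {τ : ℕ → ℝ} {visits : ℕ → Fin n}
    (hmono : Monotone τ) (hτ0 : τ 0 = 0) {δ : ℝ}
    (hstep : ∀ k, visits k ≠ visits (k + 1) → τ k + δ ≤ τ (k + 1))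
    (S : Finset (Fin n)) (c : Fin n → ℝ) (hc : ∀ v ∈ S, 0 < c v ∧ c v ≤ 1)
    (hsum : 1 < ∑ v ∈ S, c v) :
    ∃ v ∈ S, ∃ t, 0 ≤ t ∧ δ ≤ c v * (t - lastVisit τ visits v t) := by
  by_contra! hrevisit
  have hW : ∀ v ∈ S, ∀ t, 0 ≤ t → t - lastVisit τ visits v t < δ / c v := fun v hv t ht =>
    (lt_div_iff₀' (hc v hv).1).2 (hrevisit v hv t ht)
  have hbound : ∀ K, (∑ v ∈ S, c v - 1) * τ K ≤ #S * δ := by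
    intro K
    have hserved : ∑ v ∈ S, c v * τ K ≤ ∑ v ∈ S, (servedTime τ visits v K + δ) :=
      sum_le_sum fun v hv => mul_le_servedTime_add hmono hτ0 (hc v hv).1.le (hc v hv).2
        (mul_div_cancel₀ δ (hc v hv).1.ne').le hstep (hW v hv) K
    have htotal : ∑ v ∈ S, servedTime τ visits v K ≤ τ K := by
      simpa [sum_servedTime, hτ0] using
        sum_le_univ_sum_of_nonneg (s := S) (servedTime_nonneg (visits := visits) hmono · K)
    rw [← sum_mul, sum_add_distrib, sum_const, nsmul_eq_mul] at hserved
    linarith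
  obtain ⟨v, hv⟩ : S.Nonempty := nonempty_of_sum_ne_zero (f := c) (by linarith)
  refine not_bddAbove_range_of_revisits (hW v hv) ⟨#S * δ / (∑ v ∈ S, c v - 1), ?_⟩
  rintro _ ⟨K, rfl⟩
  rw [le_div_iff₀' (by linarith)]
  exact hbound K

section Spiral

variable {n s : ℕ} {ε : ℝ} {G : ℕ → Finset (Fin n)} {i : ℕ}

lemma spiral_card_mul_rate (hn : n = 2 ^ (3 * s)) (hcard : #(G i) * 2 ^ i = n) :
    (#(G i) : ℝ) * ((3 - ε) * 2 ^ i / ((n : ℝ) * Real.logb 2 n)) = (3 - ε) / (3 * s) := by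
  have hlog : Real.logb 2 n = 3 * s := by
    rw [hn, Nat.cast_pow, Nat.cast_ofNat, Real.logb_pow, Real.logb_self_eq_one one_lt_two]
    push_cast
    ring
  have hcard' : (#(G i) : ℝ) * 2 ^ i = n := by exact_mod_cast hcard
  have hn0 : (n : ℝ) ≠ 0 := by rw [hn]; positivity
  calc (#(G i) : ℝ) * ((3 - ε) * 2 ^ i / ((n : ℝ) * Real.logb 2 n))
      = n * (3 - ε) / (n * (3 * s)) := by rw [hlog, ← hcard']; ring
    _ = (3 - ε) / (3 * s) := mul_div_mul_left _ _ hn0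

lemma spiral_two_le_card (hs : 1 ≤ s) (hn : n = 2 ^ (3 * s)) (hi : i ≤ s)
    (hcard : #(G i) * 2 ^ i = n) : 2 ≤ #(G i) := by
  by_contra! hlt
  have : 2 ^ (3 * s) ≤ 2 ^ s :=
    calc 2 ^ (3 * s) = #(G i) * 2 ^ i := by rw [hcard, hn]
      _ ≤ 1 * 2 ^ s := Nat.mul_le_mul (by omega) (Nat.pow_le_pow_right two_pos hi)
      _ = 2 ^ s := one_mul _
  have := (Nat.pow_le_pow_iff_right (by norm_num)).1 this
  omega

lemma spiral_rate_mem_Ioc (hs : 1 ≤ s) (hn : n = 2 ^ (3 * s)) (hε0 : 0 < ε) (hε1 : ε < 1)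
    (hi : i ≤ s) (hcard : #(G i) * 2 ^ i = n) :
    2 * ((3 - ε) * 2 ^ i / ((n : ℝ) * Real.logb 2 n)) ∈ Set.Ioc 0 1 := by
  have hcm := spiral_card_mul_rate (ε := ε) hn hcard
  have h2 : (2 : ℝ) ≤ #(G i) := by exact_mod_cast spiral_two_le_card hs hn hi hcard
  have hs' : (1 : ℝ) ≤ s := by exact_mod_cast hs
  have hq0 : 0 < (3 - ε) / (3 * s) := by apply div_pos <;> linarith
  have hq1 : (3 - ε) / (3 * s) ≤ 1 := (div_le_one (by linarith)).2 (by linarith)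
  have hr : 0 < (3 - ε) * 2 ^ i / ((n : ℝ) * Real.logb 2 n) :=
    pos_of_mul_pos_right (hcm ▸ hq0) (by linarith)
  constructor <;> nlinarith

lemma spiral_sum_rate (hs : 1 ≤ s) (hn : n = 2 ^ (3 * s)) {h : Fin n → ℝ}
    (hdisj : ∀ i j, i ≠ j → Disjoint (G i) (G j))
    (hcard : ∀ i, 1 ≤ i → i ≤ s → #(G i) * 2 ^ i = n)
    (hrate : ∀ i, 1 ≤ i → i ≤ s → ∀ v ∈ G i,
      h v = (3 - ε) * 2 ^ i / ((n : ℝ) * Real.logb 2 n)) :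
    ∑ v ∈ (Icc 1 s).biUnion G, h v = (3 - ε) / 3 := by
  have hgroup : ∀ i ∈ Icc 1 s, ∑ v ∈ G i, h v = (3 - ε) / (3 * s) := fun i hi => by
    obtain ⟨hi1, hi2⟩ := mem_Icc.1 hi
    rw [sum_congr rfl (hrate i hi1 hi2), sum_const, nsmul_eq_mul,
      spiral_card_mul_rate hn (hcard i hi1 hi2)]
  have hs0 : (s : ℝ) ≠ 0 := by positivity
  rw [sum_biUnion fun i _ j _ hij => hdisj i j hij, sum_congr rfl hgroup, sum_const,
    Nat.card_Icc, Nat.add_sub_cancel, nsmul_eq_mul]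
  field_simp

end Spiral

theorem spiral_instance_lower_bound_general (n s : ℕ) (hs : 1 ≤ s) (hn : n = 2 ^ (3 * s))
    (ε : ℝ) (hε0 : 0 < ε) (hε1 : ε < 1)
    (d : Fin n → Fin n → ℝ)
    (dnonneg : ∀ i j, 0 ≤ d i j)
    (hd1 : ∀ i j : Fin n, i ≠ j → ((n : ℝ) ^ (-(2 : ℝ) / 3)) ≤ d i j)
    (h : Fin n → ℝ)
    (G : ℕ → Finset (Fin n))
    (hdisj : ∀ i j, i ≠ j → Disjoint (G i) (G j))
    (hcard : ∀ i, 1 ≤ i → i ≤ s → (G i).card * 2 ^ i = n)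
    (hrate : ∀ i, 1 ≤ i → i ≤ s → ∀ v ∈ G i,
      h v = (3 - ε) * 2 ^ i / ((n : ℝ) * Real.logb 2 n))
    (visits : ℕ → Fin n) (τ : ℕ → ℝ) (hτ0 : τ 0 = 0)
    (hmove : ∀ k, τ k + d (visits k) (visits (k + 1)) ≤ τ (k + 1)) :
    ∃ i, 1 ≤ i ∧ i ≤ s ∧ ∃ v ∈ G i, ∃ t : ℝ, 0 ≤ t ∧
      ((n : ℝ) ^ (-(2 : ℝ) / 3)) / 2 ≤ contHeight h τ visits v t := by
  have hmono : Monotone τ :=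
    monotone_nat_of_le_succ fun k => (le_add_of_nonneg_right (dnonneg _ _)).trans (hmove k)
  have hstep : ∀ k, visits k ≠ visits (k + 1) → τ k + (n : ℝ) ^ (-(2 : ℝ) / 3) ≤ τ (k + 1) :=
    fun k hk => (add_le_add_right (hd1 _ _ hk) _).trans (hmove k)
  have hc : ∀ v ∈ (Icc 1 s).biUnion G, 0 < 2 * h v ∧ 2 * h v ≤ 1 := fun v hv => by
    obtain ⟨i, hi, hvi⟩ := mem_biUnion.1 hv
    obtain ⟨hi1, hi2⟩ := mem_Icc.1 hi
    rw [hrate i hi1 hi2 v hvi]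
    exact spiral_rate_mem_Ioc hs hn hε0 hε1 hi2 (hcard i hi1 hi2)
  have hsum : 1 < ∑ v ∈ (Icc 1 s).biUnion G, 2 * h v := by
    rw [← mul_sum, spiral_sum_rate hs hn hdisj hcard hrate]
    linarith
  obtain ⟨v, hv, t, ht, hlate⟩ :=
    exists_le_mul_sub_lastVisit_of_one_lt_sum hmono hτ0 hstep _ _ hc hsum
  obtain ⟨i, hi, hvi⟩ := mem_biUnion.1 hv
  refine ⟨i, (mem_Icc.1 hi).1, (mem_Icc.1 hi).2, v, hvi, t, ht, ?_⟩
  rw [contHeight]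
  linarith

/-- The spiral instance `V*`: `n = 2^{3s}` points (so `s = (log₂ n)/3`), any two distinct
points at distance at least `d₁ = n^{-2/3}`, pairwise disjoint groups `G_1, …, G_s` with
`|G_i| = n/2^i`, every point of `G_i` having growth rate `(3-ε)·2^i/(n·log₂ n)`, and all
growth rates summing to at most `1`.  Then every schedule lets some bamboo of some group
`G_i` grow to height at least `d₁/2`. -/
theorem spiral_instance_lower_bound (n s : ℕ) (hs : 1 ≤ s) (hn : n = 2 ^ (3 * s))
    (ε : ℝ) (hε0 : 0 < ε) (hε1 : ε < 1)
    (d : Fin n → Fin n → ℝ)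
    (dnonneg : ∀ i j, 0 ≤ d i j) (dself : ∀ i, d i i = 0)
    (dsymm : ∀ i j, d i j = d j i) (dtri : ∀ i j k, d i k ≤ d i j + d j k)
    (hd1 : ∀ i j : Fin n, i ≠ j → ((n : ℝ) ^ (-(2 : ℝ) / 3)) ≤ d i j)
    (h : Fin n → ℝ) (hnonneg : ∀ v, 0 ≤ h v)
    (G : ℕ → Finset (Fin n))
    (hdisj : ∀ i j, i ≠ j → Disjoint (G i) (G j))
    (hcard : ∀ i, 1 ≤ i → i ≤ s → (G i).card * 2 ^ i = n)
    (hrate : ∀ i, 1 ≤ i → i ≤ s → ∀ v ∈ G i,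
      h v = (3 - ε) * 2 ^ i / ((n : ℝ) * Real.logb 2 n))
    (hsum : ∑ v, h v ≤ 1)
    (visits : ℕ → Fin n) (τ : ℕ → ℝ) (hτ0 : τ 0 = 0)
    (hmove : ∀ k, τ k + d (visits k) (visits (k + 1)) ≤ τ (k + 1)) :
    ∃ i, 1 ≤ i ∧ i ≤ s ∧ ∃ v ∈ G i, ∃ t : ℝ, 0 ≤ t ∧
      ((n : ℝ) ^ (-(2 : ℝ) / 3)) / 2 ≤ contHeight h τ visits v t :=
  spiral_instance_lower_bound_general n s hs hn ε hε0 hε1 d dnonneg hd1 h G hdisj hcard hrate visits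
    τ hτ0 hmove
end
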